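/- arXiv:1906.02581 — 4 statements merged into one kernel-verified Lean document; each statement's English description precedes it below -/
import Mathlib

section
/- For n qubits, let e₀ = |0…0⟩ be the first computational basis vector of ℂ^{2^n} and let u = F e₀ = 2^{−n/2} Σ_j e_j be the uniform superposition. Define H^A_s = I_{2^n} − (1−s)·|u⟩⟨u| − s·|e₀⟩⟨e₀| for s ∈ [0,1]. Then the minimum over s ∈ [0,1] of the gap between the second-smallest and smallest eigenvalues of H^A_s equals 2^{−n/2}, attained at s = 1/2. -/
/-!
Write `c = ⟨u, e₀⟩ = 2^{-n/2}`. For `x ≠ 1`, `x - H_s` is the rank-two update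
`(x - 1) + (1 - s)|u⟩⟨u| + s|e₀⟩⟨e₀|` of a scalar matrix, so the matrix determinant lemma reduces
its determinant to a `2 × 2` one: the characteristic polynomial of `H_s` is
`(X - 1)^{N-2} (X² - X + s(1 - s)(1 - c²))`. The two smallest eigenvalues are therefore
`(1 ∓ D)/2` with `D = √(1 - 4s(1 - s)(1 - c²))`, so the gap is `D`, and
`D² - c² = (1 - c²)(2s - 1)² ≥ 0` with equality exactly at `s = 1/2`.
-/

/-- The eigenvalues of a Hermitian matrix, sorted in nondecreasing order
(counted with multiplicity). -/
noncomputable def sortedEigs {m : Type*} [Fintype m] [DecidableEq m] {A : Matrix m m ℂ}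
    (hA : A.IsHermitian) : Fin (Fintype.card m) → ℝ :=
  hA.eigenvalues₀ ∘ Tuple.sort hA.eigenvalues₀

open Matrix Polynomial

theorem Matrix.vecMulVec_add_vecMulVec_eq_mul {m R : Type*} [Semiring R] (a b c d : m → R) :
    vecMulVec a b + vecMulVec c d = (of ![a, c])ᵀ * of ![b, d] := by
  ext i j
  simp [mul_apply, vecMulVec_apply, Fin.sum_univ_two]

theorem Matrix.det_smul_one_add_vecMulVec_add_vecMulVec {m K : Type*} [Fintype m] [DecidableEq m]
    [Field K] {α : K} (hα : α ≠ 0) (hm : 2 ≤ Fintype.card m) (a b c d : m → K) :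
    det (α • 1 + vecMulVec a b + vecMulVec c d) =
      α ^ (Fintype.card m - 2) *
        ((α + b ⬝ᵥ a) * (α + d ⬝ᵥ c) - (b ⬝ᵥ c) * (d ⬝ᵥ a)) := by
  have hdet : IsUnit (α • (1 : Matrix m m K)).det := by simp [hα]
  have hinv : (α • (1 : Matrix m m K))⁻¹ = α⁻¹ • 1 :=
    inv_eq_right_inv (by rw [smul_mul_smul_comm, mul_inv_cancel₀ hα, one_mul, one_smul])
  have hsmall : 1 + α⁻¹ • (of ![b, d] * (of ![a, c])ᵀ) =
      !![1 + α⁻¹ * (b ⬝ᵥ a), α⁻¹ * (b ⬝ᵥ c); α⁻¹ * (d ⬝ᵥ a), 1 + α⁻¹ * (d ⬝ᵥ c)] := by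
    ext i j
    fin_cases i <;> fin_cases j <;> simp [vecMul, dotProduct_comm]
  have hpow : α ^ Fintype.card m = α ^ (Fintype.card m - 2) * α ^ 2 := by
    rw [← pow_add, Nat.sub_add_cancel hm]
  rw [add_assoc, vecMulVec_add_vecMulVec_eq_mul, det_add_mul _ _ hdet, hinv, Matrix.mul_smul,
    Matrix.mul_one, Matrix.smul_mul, hsmall, det_smul, det_one, det_fin_two_of, hpow]
  field_simp

theorem ofFn_sortedEigs_eq_of_charpoly_eq {m : Type*} [Fintype m] [DecidableEq m]
    {A : Matrix m m ℂ} (hA : A.IsHermitian) {L : List ℝ} (hL : L.Pairwise (· ≤ ·))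
    (hchar : A.charpoly = (L.map fun a : ℝ => X - C (a : ℂ)).prod) :
    List.ofFn (sortedEigs hA) = L := by
  have hroots : (L : Multiset ℝ).map ((↑) : ℝ → ℂ) =
      (List.ofFn hA.eigenvalues₀ : Multiset ℝ).map ((↑) : ℝ → ℂ) := by
    have hchar' : A.charpoly = (((L : Multiset ℝ).map ((↑) : ℝ → ℂ)).map fun a => X - C a).prod := by
      rw [hchar, Multiset.map_map]
      rfl
    rw [← roots_multiset_prod_X_sub_C (Multiset.map _ _), ← hchar',
      hA.roots_charpoly_eq_eigenvalues₀, ← Multiset.map_map, Fin.univ_val_map]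
    rfl
  have hperm : (List.ofFn (sortedEigs hA)).Perm L :=
    (Equiv.Perm.ofFn_comp_perm _ _).trans
      (Multiset.coe_eq_coe.mp (Multiset.map_injective Complex.ofReal_injective hroots)).symm
  exact hperm.eq_of_pairwise' (Tuple.monotone_sort _).sortedLE_ofFn.pairwise hL

theorem sortedEigs_eq_getElem {m : Type*} [Fintype m] [DecidableEq m] {A : Matrix m m ℂ}
    (hA : A.IsHermitian) {L : List ℝ} (h : List.ofFn (sortedEigs hA) = L)
    (i : Fin (Fintype.card m)) (hi : (i : ℕ) < L.length) :
    sortedEigs hA i = L[(i : ℕ)] := by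
  subst h
  simp

theorem sq_le_one_sub_four_mul {c : ℝ} (hc : c ^ 2 ≤ 1) (s : ℝ) :
    c ^ 2 ≤ 1 - 4 * s * (1 - s) * (1 - c ^ 2) := by
  -- the difference is `(1 - c ^ 2) * (2 * s - 1) ^ 2`, which vanishes at `s = 1 / 2`
  nlinarith [mul_nonneg (sub_nonneg.mpr hc) (sq_nonneg (2 * s - 1))]

noncomputable def adiabaticHamiltonian {m : Type*} [Fintype m] [DecidableEq m] (u e : m → ℂ)
    (s : ℝ) : Matrix m m ℂ :=
  1 - ((1 - s : ℝ) : ℂ) • vecMulVec u (star u) - ((s : ℝ) : ℂ) • vecMulVec e (star e)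

section AdiabaticHamiltonian

variable {m : Type*} [Fintype m] [DecidableEq m] {u e : m → ℂ} {c : ℝ}

theorem scalar_sub_adiabaticHamiltonian (s : ℝ) (x : ℂ) :
    scalar m x - adiabaticHamiltonian u e s =
      (x - 1) • 1 + vecMulVec u (((1 - s : ℝ) : ℂ) • star u) +
        vecMulVec e (((s : ℝ) : ℂ) • star e) := by
  rw [adiabaticHamiltonian, vecMulVec_smul, vecMulVec_smul, scalar_apply, ← smul_one_eq_diagonal,
    sub_smul, one_smul]
  abel

theorem charpoly_adiabaticHamiltonian (hm : 2 ≤ Fintype.card m) (hu : star u ⬝ᵥ u = 1)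
    (he : star e ⬝ᵥ e = 1) (hue : star u ⬝ᵥ e = c) (heu : star e ⬝ᵥ u = c) {s l₁ l₂ : ℝ}
    (hsum : l₁ + l₂ = 1) (hprod : l₁ * l₂ = s * (1 - s) * (1 - c ^ 2)) :
    (adiabaticHamiltonian u e s).charpoly =
      (X - C (l₁ : ℂ)) * (X - C (l₂ : ℂ)) * (X - 1) ^ (Fintype.card m - 2) := by
  apply eq_of_infinite_eval_eq
  refine Set.Infinite.mono (s := {x : ℂ | x ≠ 1}) (fun x hx => ?_)
    (Set.infinite_of_finite_compl (by simp))
  have hsumC : (l₁ : ℂ) + l₂ = 1 := by exact_mod_cast hsum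
  have hprodC : (l₁ : ℂ) * l₂ = s * (1 - s) * (1 - c ^ 2) := by exact_mod_cast hprod
  simp only [Set.mem_ofPred_eq, eval_charpoly, scalar_sub_adiabaticHamiltonian,
    det_smul_one_add_vecMulVec_add_vecMulVec (sub_ne_zero.mpr hx) hm, smul_dotProduct, hu, he,
    hue, heu, smul_eq_mul, mul_one, Complex.ofReal_sub, Complex.ofReal_one, sub_add_sub_cancel,
    eval_mul, eval_sub, eval_X, eval_C, eval_pow, eval_one]
  linear_combination (x - 1) ^ (Fintype.card m - 2) * (x * hsumC - hprodC)

theorem ofFn_sortedEigs_adiabaticHamiltonian (hm : 2 ≤ Fintype.card m) (hu : star u ⬝ᵥ u = 1)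
    (he : star e ⬝ᵥ e = 1) (hue : star u ⬝ᵥ e = c) (heu : star e ⬝ᵥ u = c) (hc : c ^ 2 ≤ 1)
    {s : ℝ} (hs : s ∈ Set.Icc 0 1) (hA : (adiabaticHamiltonian u e s).IsHermitian) :
    List.ofFn (sortedEigs hA) =
      (1 - √(1 - 4 * s * (1 - s) * (1 - c ^ 2))) / 2 ::
        (1 + √(1 - 4 * s * (1 - s) * (1 - c ^ 2))) / 2 ::
          List.replicate (Fintype.card m - 2) 1 := by
  obtain ⟨hs₀, hs₁⟩ := hs
  set D := √(1 - 4 * s * (1 - s) * (1 - c ^ 2))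
  have hD₀ : 0 ≤ D := Real.sqrt_nonneg _
  have hD₁ : D ≤ 1 := Real.sqrt_le_one.mpr (by nlinarith [mul_nonneg hs₀ (sub_nonneg.mpr hs₁)])
  have hD_sq : D ^ 2 = 1 - 4 * s * (1 - s) * (1 - c ^ 2) :=
    Real.sq_sqrt ((sq_nonneg c).trans (sq_le_one_sub_four_mul hc s))
  apply ofFn_sortedEigs_eq_of_charpoly_eq
  · simp only [List.pairwise_cons, List.mem_cons, List.mem_replicate, List.pairwise_replicate]
    refine ⟨?_, ?_, Or.inr le_rfl⟩ <;> grind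
  · rw [charpoly_adiabaticHamiltonian hm hu he hue heu (l₁ := (1 - D) / 2) (l₂ := (1 + D) / 2)
      (by ring) (by linear_combination -hD_sq / 4)]
    simp only [List.map_cons, List.map_replicate, List.prod_cons, List.prod_replicate,
      Complex.ofReal_one, map_one, mul_assoc]

theorem sortedEigs_sub_sortedEigs_adiabaticHamiltonian (hm : 2 ≤ Fintype.card m)
    (hu : star u ⬝ᵥ u = 1) (he : star e ⬝ᵥ e = 1) (hue : star u ⬝ᵥ e = c)
    (heu : star e ⬝ᵥ u = c) (hc : c ^ 2 ≤ 1) {s : ℝ} (hs : s ∈ Set.Icc 0 1)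
    (hA : (adiabaticHamiltonian u e s).IsHermitian) (i j : Fin (Fintype.card m))
    (hi : (i : ℕ) = 0) (hj : (j : ℕ) = 1) :
    sortedEigs hA j - sortedEigs hA i = √(1 - 4 * s * (1 - s) * (1 - c ^ 2)) := by
  have hL := ofFn_sortedEigs_adiabaticHamiltonian hm hu he hue heu hc hs hA
  rw [sortedEigs_eq_getElem hA hL j (by simp [hj]), sortedEigs_eq_getElem hA hL i (by simp [hi])]
  simp only [hi, hj, List.getElem_cons_succ, List.getElem_cons_zero]
  ring

end AdiabaticHamiltonian

/-- for `n` qubits, with `e₀ = |0…0⟩` and `u = F e₀` the uniform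
superposition (`u j = 2^{-n/2}` for all `j`), the evolution
`H^A_s = I − (1−s)|u⟩⟨u| − s|e₀⟩⟨e₀|` has minimal spectral gap `2^{-n/2}` over
`s ∈ [0,1]`, attained at `s = 1/2`. -/
theorem stmt_1 (n : ℕ) (hn : 1 ≤ n)
    (e₀ u : Fin (2 ^ n) → ℂ)
    (he₀ : e₀ = fun j => if j = 0 then 1 else 0)
    (hu : u = fun _ => ((Real.sqrt (2 ^ n))⁻¹ : ℂ))
    (H : ℝ → Matrix (Fin (2 ^ n)) (Fin (2 ^ n)) ℂ)
    (hHdef : ∀ s : ℝ, H s = 1 - ((1 - s : ℝ) : ℂ) • Matrix.vecMulVec u (star u)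
      - ((s : ℝ) : ℂ) • Matrix.vecMulVec e₀ (star e₀))
    (hH : ∀ s : ℝ, (H s).IsHermitian) :
    sortedEigs (hH (1 / 2)) ⟨1, by simpa using Nat.one_lt_two_pow_iff.mpr (by omega)⟩ -
        sortedEigs (hH (1 / 2)) ⟨0, by simp⟩ = (Real.sqrt (2 ^ n))⁻¹ ∧
    ∀ s ∈ Set.Icc (0 : ℝ) 1,
      (Real.sqrt (2 ^ n))⁻¹ ≤
        sortedEigs (hH s) ⟨1, by simpa using Nat.one_lt_two_pow_iff.mpr (by omega)⟩ -
          sortedEigs (hH s) ⟨0, by simp⟩ := by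
  set c : ℝ := (Real.sqrt (2 ^ n))⁻¹
  have hc₀ : 0 ≤ c := by positivity
  have hc_sq : c ^ 2 * 2 ^ n = 1 := by
    rw [inv_pow, Real.sq_sqrt (by positivity), inv_mul_cancel₀ (by positivity)]
  have hc₁ : c ^ 2 ≤ 1 := by nlinarith [one_le_pow₀ (M₀ := ℝ) (a := 2) (n := n) (by norm_num)]
  have hm : 2 ≤ Fintype.card (Fin (2 ^ n)) := by
    rw [Fintype.card_fin]
    exact Nat.one_lt_two_pow (by omega)
  have hu' : u = fun _ => (c : ℂ) := by simp [hu, c]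
  have huu : star u ⬝ᵥ u = 1 := by
    simpa [hu', dotProduct, sq, mul_comm] using congrArg ((↑) : ℝ → ℂ) hc_sq
  have hee : star e₀ ⬝ᵥ e₀ = 1 := by simp [he₀, dotProduct]
  have hue : star u ⬝ᵥ e₀ = c := by simp [hu', he₀, dotProduct]
  have heu : star e₀ ⬝ᵥ u = c := by simp [hu', he₀, dotProduct]
  have hHs : H = adiabaticHamiltonian u e₀ := funext hHdef
  subst hHs
  have hgap := fun s hs ↦
    sortedEigs_sub_sortedEigs_adiabaticHamiltonian hm huu hee hue heu hc₁ (s := s) hs (hH s)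
  refine ⟨?_, fun s hs => ?_⟩
  · rw [hgap _ ⟨by norm_num, by norm_num⟩ _ _ rfl rfl,
      show 1 - 4 * (1 / 2 : ℝ) * (1 - 1 / 2) * (1 - c ^ 2) = c ^ 2 by ring, Real.sqrt_sq hc₀]
  · rw [hgap s hs _ _ rfl rfl]
    exact Real.le_sqrt_of_sq_le (sq_le_one_sub_four_mul hc₁ s)
end

section
/- Let H₀, H₁ be Hermitian matrices on ℂ^d, let V be a subspace of ℂ^d invariant under H₀, and suppose the escape rate of V under H₁ is at most β, i.e., ‖Π_{V⊥} H₁ v‖ ≤ β for every unit vector v ∈ V. Let τ > 0 with βτ ≤ π/2, and let ψ : [0,τ] → ℂ^d be differentiable with ψ'(t) = −i[(1 − t/τ)H₀ + (t/τ)H₁]ψ(t) and ψ(0) a unit vector in V. Then ‖Π_V ψ(τ)‖ ≥ cos(βτ), and hence ‖Π_{V⊥} ψ(τ)‖ ≤ sin(βτ). -/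
/-!
Let `u t = ‖Π_{V⊥} ψ t‖²`. The evolution is unitary, so `‖Π_V ψ t‖² = 1 - u t`. Writing
`ψ = p + q` with `p ∈ V`, `q ∈ V⊥`, the self-adjointness of `H(t)` kills the `q`-contribution and
the invariance of `V` under `H₀` leaves only the escape of `H₁`, so
`u' = 2 Im ⟪q, Π_{V⊥} H(t) p⟫ ≤ 2β √u √(1 - u)`.
Since `sin² (β t)` solves this with equality and `u 0 = 0`, a barrier argument against
`sin² (γ t + ε)` for `γ > β`, `ε > 0` gives `u τ ≤ sin² (β τ)` as long as `β τ ≤ π / 2`.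
-/

open Set Filter Topology
open scoped InnerProductSpace

section Comparison

open Real

variable {u u' : ℝ → ℝ} {β τ : ℝ}

theorem le_sin_sq_add_of_hasDerivAt_le {γ ε : ℝ} (hβγ : β < γ) (hγ : 0 < γ) (hε : 0 < ε)
    (hγτ : γ * τ + ε ≤ π / 2) (hu : ∀ t ∈ Icc 0 τ, HasDerivAt u (u' t) t) (hu0 : u 0 = 0)
    (hu' : ∀ t ∈ Icc 0 τ, u' t ≤ 2 * β * (√(u t) * √(1 - u t))) :
    ∀ t ∈ Icc 0 τ, u t ≤ sin (γ * t + ε) ^ 2 := by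
  have hB (t : ℝ) : HasDerivAt (fun t => sin (γ * t + ε) ^ 2)
      (2 * γ * (sin (γ * t + ε) * cos (γ * t + ε))) t := by
    refine ((((hasDerivAt_id' t).const_mul γ).add_const ε).sin.fun_pow 2).congr_deriv ?_
    push_cast
    ring
  refine image_le_of_deriv_right_lt_deriv_boundary
    (fun t ht => (hu t ht).continuousAt.continuousWithinAt)
    (fun t ht => (hu t (Ico_subset_Icc_self ht)).hasDerivWithinAt)
    (by rw [hu0]; positivity) hB fun t ht hut => ?_
  set θ := γ * t + ε
  have hθ : θ ∈ Ioo 0 (π / 2) := by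
    constructor <;> nlinarith [mul_nonneg hγ.le ht.1, mul_lt_mul_of_pos_left ht.2 hγ]
  have hsin : 0 < sin θ := sin_pos_of_pos_of_lt_pi hθ.1 (by linarith [hθ.2, pi_pos])
  have hcos : 0 < cos θ := cos_pos_of_mem_Ioo ⟨by linarith [hθ.1, pi_pos], hθ.2⟩
  -- At a contact point `u = sin² θ`, so the hypothesis reads `u' ≤ 2β sin θ cos θ`.
  have hsqrt : √(u t) * √(1 - u t) = sin θ * cos θ := by
    rw [hut, ← cos_sq', sqrt_sq hsin.le, sqrt_sq hcos.le]
  calc u' t ≤ 2 * β * (sin θ * cos θ) := hsqrt ▸ hu' t (Ico_subset_Icc_self ht)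
    _ < 2 * γ * (sin θ * cos θ) := by gcongr

theorem le_sin_sq_of_hasDerivAt_le (hβ : 0 ≤ β) (hτ : 0 ≤ τ) (hβτ : β * τ ≤ π / 2)
    (hu : ∀ t ∈ Icc 0 τ, HasDerivAt u (u' t) t) (hu0 : u 0 = 0) (huτ : u τ ≤ 1)
    (hu' : ∀ t ∈ Icc 0 τ, u' t ≤ 2 * β * (√(u t) * √(1 - u t))) :
    u τ ≤ sin (β * τ) ^ 2 := by
  -- At `βτ = π/2` there is no room for the perturbation, but then `sin (β * τ) = 1`.
  rcases hβτ.eq_or_lt with hβτ | hβτ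
  · simpa [hβτ] using huτ
  have hlim : Tendsto (fun ε => sin ((β + ε) * τ + ε) ^ 2) (𝓝[>] 0) (𝓝 (sin (β * τ) ^ 2)) := by
    apply tendsto_nhdsWithin_of_tendsto_nhds
    simpa using ((by fun_prop : Continuous fun ε => sin ((β + ε) * τ + ε) ^ 2).tendsto 0)
  have hsmall : ∀ᶠ ε in 𝓝[>] 0, (β + ε) * τ + ε < π / 2 := by
    apply eventually_nhdsWithin_of_eventually_nhds
    exact ((by fun_prop : Continuous fun ε => (β + ε) * τ + ε).tendsto 0).eventually_lt_const
      (by simpa using hβτ)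
  refine ge_of_tendsto hlim ?_
  filter_upwards [hsmall, self_mem_nhdsWithin] with ε hε (hε0 : 0 < ε)
  exact le_sin_sq_add_of_hasDerivAt_le (by linarith) (by linarith) hε0 hε.le hu hu0 hu' τ
    (right_mem_Icc.mpr hτ)

end Comparison

section EscapeRate

variable {𝕜 E : Type*} [RCLike 𝕜] [NormedAddCommGroup E] [InnerProductSpace 𝕜 E]
  (V : Submodule 𝕜 E) [V.HasOrthogonalProjection]

/-- The escape rate `sup_{v ∈ V, ‖v‖ = 1} ‖Π_{V⊥} T v‖` is at most `β`, stated homogeneously. -/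
def EscapeRateLE (T : E →L[𝕜] E) (β : ℝ) : Prop :=
  ∀ v ∈ V, ‖Vᗮ.starProjection (T v)‖ ≤ β * ‖v‖

variable {V} {T T' : E →L[𝕜] E} {β β' : ℝ}

theorem EscapeRateLE.of_norm_eq_one (h : ∀ v ∈ V, ‖v‖ = 1 → ‖Vᗮ.starProjection (T v)‖ ≤ β) :
    EscapeRateLE V T β := by
  intro v hv
  rcases eq_or_ne v 0 with rfl | hv0
  · simp
  have hscaled := h _ (V.smul_mem (‖v‖⁻¹ : 𝕜) hv) (norm_smul_inv_norm hv0)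
  rw [map_smul, map_smul, norm_smul, norm_inv, RCLike.norm_ofReal, abs_norm] at hscaled
  rwa [inv_mul_le_iff₀ (norm_pos_iff.mpr hv0), mul_comm] at hscaled

theorem escapeRateLE_zero_of_mapsTo (h : ∀ v ∈ V, T v ∈ V) : EscapeRateLE V T 0 := by
  intro v hv
  simp [Submodule.starProjection_orthogonal_apply_eq_zero (h v hv)]

theorem EscapeRateLE.nonneg (h : EscapeRateLE V T β) {v : E} (hv : v ∈ V) (hv0 : v ≠ 0) :
    0 ≤ β :=
  nonneg_of_mul_nonneg_left ((norm_nonneg _).trans (h v hv)) (norm_pos_iff.mpr hv0)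

theorem EscapeRateLE.mono (h : EscapeRateLE V T β) (hβ : β ≤ β') : EscapeRateLE V T β' :=
  fun v hv => (h v hv).trans (mul_le_mul_of_nonneg_right hβ (norm_nonneg v))

theorem EscapeRateLE.add (h : EscapeRateLE V T β) (h' : EscapeRateLE V T' β') :
    EscapeRateLE V (T + T') (β + β') := fun v hv =>
  calc ‖Vᗮ.starProjection ((T + T') v)‖
      ≤ ‖Vᗮ.starProjection (T v)‖ + ‖Vᗮ.starProjection (T' v)‖ := by
        rw [add_apply, map_add]
        exact norm_add_le _ _
    _ ≤ (β + β') * ‖v‖ := by linarith [h v hv, h' v hv]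

theorem EscapeRateLE.smul (h : EscapeRateLE V T β) (c : 𝕜) :
    EscapeRateLE V (c • T) (‖c‖ * β) := fun v hv => by
  rw [smul_apply, map_smul, norm_smul, mul_assoc]
  exact mul_le_mul_of_nonneg_left (h v hv) (norm_nonneg c)

end EscapeRate

section Schrodinger

open Complex

variable {E : Type*} [NormedAddCommGroup E] [InnerProductSpace ℂ E]

theorem HasDerivAt.norm_sq_complex {f : ℝ → E} {f' : E} {t : ℝ} (hf : HasDerivAt f f' t) :
    HasDerivAt (‖f ·‖ ^ 2) (2 * re ⟪f t, f'⟫_ℂ) t := by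
  let _ := InnerProductSpace.rclikeToReal ℂ E
  simpa [real_inner_eq_re_inner ℂ] using hf.norm_sq

theorem re_inner_neg_I_smul (x y : E) : re ⟪x, -I • y⟫_ℂ = im ⟪x, y⟫_ℂ := by
  simp [inner_smul_right]

variable {A : ℝ → E →L[ℂ] E} {ψ : ℝ → E} {τ : ℝ}

theorem norm_eq_of_hasDerivAt_neg_I_smul (hA : ∀ t ∈ Icc 0 τ, (A t : E →ₗ[ℂ] E).IsSymmetric)
    (hψ : ∀ t ∈ Icc 0 τ, HasDerivAt ψ (-I • A t (ψ t)) t) : ∀ t ∈ Icc 0 τ, ‖ψ t‖ = ‖ψ 0‖ := by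
  have hderiv (t) (ht : t ∈ Icc 0 τ) : HasDerivAt (‖ψ ·‖ ^ 2) 0 t := by
    have him : im ⟪ψ t, A t (ψ t)⟫_ℂ = 0 := (hA t ht).im_inner_self_apply (ψ t)
    have h := (hψ t ht).norm_sq_complex
    rwa [re_inner_neg_I_smul, him, mul_zero] at h
  intro t ht
  have hsq := constant_of_has_deriv_right_zero
    (fun t ht => (hderiv t ht).continuousAt.continuousWithinAt)
    (fun t ht => (hderiv t (Ico_subset_Icc_self ht)).hasDerivWithinAt) t ht
  exact (pow_left_inj₀ (norm_nonneg _) (norm_nonneg _) two_ne_zero).mp hsq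

variable {V : Submodule ℂ E} [V.HasOrthogonalProjection]

theorem re_inner_starProjection_orthogonal_neg_I_smul_le {T : E →L[ℂ] E} {β : ℝ}
    (hT : (T : E →ₗ[ℂ] E).IsSymmetric) (hV : EscapeRateLE V T β) (x : E) :
    re ⟪Vᗮ.starProjection x, Vᗮ.starProjection (-I • T x)⟫_ℂ ≤
      β * (‖Vᗮ.starProjection x‖ * ‖V.starProjection x‖) := by
  set p := V.starProjection x
  set q := Vᗮ.starProjection x
  have hq : Vᗮ.starProjection q = q :=
    Submodule.starProjection_eq_self_iff.mpr (Vᗮ.starProjection_apply_mem x)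
  -- Split `x = p + q`: the `q`-part drops out because `⟪q, T q⟫` is real.
  calc re ⟪q, Vᗮ.starProjection (-I • T x)⟫_ℂ = im ⟪q, Vᗮ.starProjection (T p)⟫_ℂ := by
        rw [← Submodule.inner_starProjection_left_eq_right, hq, re_inner_neg_I_smul,
          ← V.starProjection_add_starProjection_orthogonal x, map_add, inner_add_right, add_im,
          ← Submodule.inner_starProjection_left_eq_right Vᗮ q (T p), hq]
        have hqq : im ⟪q, T q⟫_ℂ = 0 := hT.im_inner_self_apply q
        rw [hqq, add_zero]
    _ ≤ ‖q‖ * ‖Vᗮ.starProjection (T p)‖ := (im_le_norm _).trans (norm_inner_le_norm _ _)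
    _ ≤ ‖q‖ * (β * ‖p‖) := by gcongr; exact hV p (V.starProjection_apply_mem x)
    _ = β * (‖q‖ * ‖p‖) := by ring

theorem sq_norm_starProjection_orthogonal_le_sin_sq {β : ℝ} (hβ : 0 ≤ β) (hτ : 0 ≤ τ)
    (hβτ : β * τ ≤ Real.pi / 2) (hA : ∀ t ∈ Icc 0 τ, (A t : E →ₗ[ℂ] E).IsSymmetric)
    (hesc : ∀ t ∈ Icc 0 τ, EscapeRateLE V (A t) β)
    (hψ : ∀ t ∈ Icc 0 τ, HasDerivAt ψ (-I • A t (ψ t)) t) (hψ0V : ψ 0 ∈ V) (hψ0 : ‖ψ 0‖ = 1) :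
    ‖Vᗮ.starProjection (ψ τ)‖ ^ 2 ≤ Real.sin (β * τ) ^ 2 := by
  have hpyth (t) (ht : t ∈ Icc 0 τ) :
      ‖Vᗮ.starProjection (ψ t)‖ ^ 2 + ‖V.starProjection (ψ t)‖ ^ 2 = 1 := by
    rw [add_comm, ← V.norm_sq_eq_add_norm_sq_starProjection,
      norm_eq_of_hasDerivAt_neg_I_smul hA hψ t ht, hψ0, one_pow]
  have hτ' : τ ∈ Icc 0 τ := right_mem_Icc.mpr hτ
  refine le_sin_sq_of_hasDerivAt_le hβ hτ hβτ (u := fun t => ‖Vᗮ.starProjection (ψ t)‖ ^ 2)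
    (fun t ht => ((Vᗮ.starProjection.restrictScalars ℝ).hasFDerivAt.comp_hasDerivAt t
      (hψ t ht)).norm_sq_complex)
    (by simp [Submodule.starProjection_orthogonal_apply_eq_zero hψ0V])
    (by nlinarith [hpyth τ hτ']) fun t ht => ?_
  rw [Real.sqrt_sq (norm_nonneg _), ← hpyth t ht, add_sub_cancel_left,
    Real.sqrt_sq (norm_nonneg _)]
  simp only [Function.comp_apply, ContinuousLinearMap.coe_restrictScalars']
  linarith [re_inner_starProjection_orthogonal_neg_I_smul_le (hA t ht) (hesc t ht) (ψ t)]

theorem cos_le_norm_starProjection_and_norm_orthogonal_le_sin {β : ℝ} (hτ : 0 ≤ τ)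
    (hβτ : β * τ ≤ Real.pi / 2) (hA : ∀ t ∈ Icc 0 τ, (A t : E →ₗ[ℂ] E).IsSymmetric)
    (hesc : ∀ t ∈ Icc 0 τ, EscapeRateLE V (A t) β)
    (hψ : ∀ t ∈ Icc 0 τ, HasDerivAt ψ (-I • A t (ψ t)) t) (hψ0V : ψ 0 ∈ V) (hψ0 : ‖ψ 0‖ = 1) :
    Real.cos (β * τ) ≤ ‖V.starProjection (ψ τ)‖ ∧ ‖Vᗮ.starProjection (ψ τ)‖ ≤ Real.sin (β * τ) := by
  have hβ : 0 ≤ β :=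
    (hesc 0 (left_mem_Icc.mpr hτ)).nonneg hψ0V (norm_ne_zero_iff.mp (by simp [hψ0]))
  have hsq := sq_norm_starProjection_orthogonal_le_sin_sq hβ hτ hβτ hA hesc hψ hψ0V hψ0
  have hpyth := V.norm_sq_eq_add_norm_sq_starProjection (ψ τ)
  rw [norm_eq_of_hasDerivAt_neg_I_smul hA hψ τ (right_mem_Icc.mpr hτ), hψ0] at hpyth
  have hcos : 0 ≤ Real.cos (β * τ) :=
    Real.cos_nonneg_of_mem_Icc ⟨by nlinarith [Real.pi_pos], hβτ⟩
  have hsin : 0 ≤ Real.sin (β * τ) :=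
    Real.sin_nonneg_of_nonneg_of_le_pi (by positivity) (by linarith [Real.pi_pos])
  constructor
  · refine (pow_le_pow_iff_left₀ hcos (norm_nonneg _) two_ne_zero).mp ?_
    linarith [Real.sin_sq_add_cos_sq (β * τ)]
  · exact (pow_le_pow_iff_left₀ (norm_nonneg _) hsin two_ne_zero).mp hsq

end Schrodinger

/-- if `V` is invariant under `H₀` and the escape rate of `V` under `H₁` is at
most `β`, then the solution of `ψ' = −i[(1−t/τ)H₀ + (t/τ)H₁]ψ` started at a unit vector in
`V` satisfies `‖Π_V ψ(τ)‖ ≥ cos(βτ)` and `‖Π_{V⊥} ψ(τ)‖ ≤ sin(βτ)` whenever `βτ ≤ π/2`. -/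
theorem stmt_6 (d : ℕ) (H₀ H₁ : Matrix (Fin d) (Fin d) ℂ)
    (hH₀ : H₀.IsHermitian) (hH₁ : H₁.IsHermitian)
    (V : Submodule ℂ (EuclideanSpace ℂ (Fin d)))
    (hinv : ∀ v ∈ V, Matrix.toEuclideanCLM (𝕜 := ℂ) H₀ v ∈ V)
    (β : ℝ)
    (hesc : ∀ v ∈ V, ‖v‖ = 1 →
      ‖(Submodule.orthogonalProjectionOnto Vᗮ (Matrix.toEuclideanCLM (𝕜 := ℂ) H₁ v) :
        EuclideanSpace ℂ (Fin d))‖ ≤ β)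
    (τ : ℝ) (hτ : 0 < τ) (hβτ : β * τ ≤ Real.pi / 2)
    (ψ : ℝ → EuclideanSpace ℂ (Fin d))
    (hψ : ∀ t ∈ Set.Icc (0 : ℝ) τ,
      HasDerivAt ψ ((-Complex.I) • Matrix.toEuclideanCLM (𝕜 := ℂ)
        (((1 - t / τ : ℝ) : ℂ) • H₀ + ((t / τ : ℝ) : ℂ) • H₁) (ψ t)) t)
    (hψ0V : ψ 0 ∈ V) (hψ0 : ‖ψ 0‖ = 1) :
    Real.cos (β * τ) ≤ ‖(Submodule.orthogonalProjectionOnto V (ψ τ) : EuclideanSpace ℂ (Fin d))‖ ∧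
    ‖(Submodule.orthogonalProjectionOnto Vᗮ (ψ τ) : EuclideanSpace ℂ (Fin d))‖ ≤ Real.sin (β * τ) := by
  have hesc₁ : EscapeRateLE V (Matrix.toEuclideanCLM (𝕜 := ℂ) H₁) β :=
    EscapeRateLE.of_norm_eq_one hesc
  have hβ : 0 ≤ β := hesc₁.nonneg hψ0V (norm_ne_zero_iff.mp (by simp [hψ0]))
  refine cos_le_norm_starProjection_and_norm_orthogonal_le_sin hτ.le hβτ (fun t _ => ?_)
    (fun t ht => ?_) hψ hψ0V hψ0
  · rw [Matrix.coe_toEuclideanCLM_eq_toEuclideanLin, Matrix.isSymmetric_toEuclideanLin_iff]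
    exact (hH₀.smul (Complex.conj_ofReal _)).add (hH₁.smul (Complex.conj_ofReal _))
  · have hs : t / τ ∈ Icc 0 1 := ⟨div_nonneg ht.1 hτ.le, div_le_one_of_le₀ ht.2 hτ.le⟩
    rw [map_add, map_smul, map_smul]
    refine (((escapeRateLE_zero_of_mapsTo hinv).smul _).add (hesc₁.smul _)).mono ?_
    rw [mul_zero, zero_add, Complex.norm_real, Real.norm_of_nonneg hs.1]
    exact mul_le_of_le_one_left hβ hs.2
end

section
/- Let {w_i}_{i=1}^N be an orthonormal basis of a finite-dimensional complex Hilbert space ℋ of dimension N, and let X be a subspace of ℋ. For any natural number d ≤ N there exists a set D of d basis indices such that the subspace W = span{w_i : i ∈ D} satisfies ‖Π_W Π_X‖² ≤ d · (dim X)/N, where Π_W, Π_X are the orthogonal projections onto W and X and ‖·‖ is the operator norm. -/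
/-!
With `f i = ‖Π_X w_i‖²`, Parseval in an orthonormal basis of `X` and in `w` gives
`∑ i, f i = dim X`, so some `d` indices carry at most the average share `d · dim X / N` of
this sum. For `W = span {w_i : i ∈ D}` one has `‖Π_W Π_X x‖² = ∑ i ∈ D, |⟪Π_X w_i, x⟫|²`,
and Cauchy–Schwarz bounds `‖Π_W Π_X‖²` by the Hilbert–Schmidt sum `∑ i ∈ D, f i`.
-/

open scoped InnerProductSpace

section Averaging

variable {R ι : Type*} [Field R] [LinearOrder R] [IsStrictOrderedRing R] [Fintype ι]

theorem Finset.exists_card_eq_card_mul_sum_le (f : ι → R) {d : ℕ} (hd : d ≤ Fintype.card ι) :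
    ∃ s : Finset ι, s.card = d ∧ Fintype.card ι * ∑ i ∈ s, f i ≤ d * ∑ i, f i := by
  classical
  induction d with
  | zero => exact ⟨∅, rfl, by simp⟩
  | succ d ih =>
    obtain ⟨s, hcard, hs⟩ := ih (Nat.le_of_succ_le hd)
    have hcard_compl : sᶜ.card = Fintype.card ι - d := by rw [card_compl, hcard]
    obtain ⟨i, hi, hmin⟩ := sᶜ.exists_min_image f (by rw [← card_pos, hcard_compl]; omega)
    have hi_le : ((Fintype.card ι - d : ℕ) : R) * f i ≤ ∑ j, f j - ∑ j ∈ s, f j := by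
      rw [← sum_compl_add_sum s f, add_sub_cancel_right, ← hcard_compl, ← nsmul_eq_mul]
      exact card_nsmul_le_sum _ _ _ hmin
    refine ⟨insert i s, by rw [card_insert_of_notMem (mem_compl.mp hi), hcard], ?_⟩
    rw [sum_insert (mem_compl.mp hi)]
    have hd' : (d : R) + 1 ≤ Fintype.card ι := by exact_mod_cast hd
    rw [Nat.cast_sub (Nat.le_of_succ_le hd)] at hi_le
    push_cast
    -- with `N = card ι`, `S = ∑ j, f j`, `T = ∑ j ∈ s, f j`:
    -- `(N - d) * ((d + 1) * S - N * (T + f i)) ≥ (N - d - 1) * (d * S - N * T) ≥ 0`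
    nlinarith [mul_le_mul_of_nonneg_left hs (sub_nonneg.mpr hd')]

theorem Finset.exists_card_eq_sum_le_mul_sum_div (f : ι → R) {d : ℕ} (hd : d ≤ Fintype.card ι) :
    ∃ s : Finset ι, s.card = d ∧ ∑ i ∈ s, f i ≤ d * (∑ i, f i) / Fintype.card ι := by
  obtain ⟨s, hcard, hs⟩ := exists_card_eq_card_mul_sum_le f hd
  refine ⟨s, hcard, ?_⟩
  rcases (Fintype.card ι).eq_zero_or_pos with hι | hι
  · obtain rfl : s = ∅ := card_eq_zero.mp (by omega)
    simp [hι]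
  · rwa [le_div_iff₀ (by exact_mod_cast hι), mul_comm]

end Averaging

section Projection

variable {𝕜 E F ι : Type*} [RCLike 𝕜] [NormedAddCommGroup E] [InnerProductSpace 𝕜 E]
  [NormedAddCommGroup F] [InnerProductSpace 𝕜 F] [Fintype ι]

theorem Submodule.norm_starProjection_sq_eq_sum {K : Submodule 𝕜 E} [K.HasOrthogonalProjection]
    (b : OrthonormalBasis ι 𝕜 K) (x : E) :
    ‖K.starProjection x‖ ^ 2 = ∑ i, ‖⟪(b i : E), x⟫_𝕜‖ ^ 2 := by
  simp only [starProjection_apply, norm_coe, ← b.sum_sq_norm_inner_right,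
    inner_orthogonalProjectionOnto_eq_of_mem_left]

theorem Submodule.sum_norm_starProjection_sq_eq_finrank (b : OrthonormalBasis ι 𝕜 E)
    (K : Submodule 𝕜 E) [FiniteDimensional 𝕜 K] :
    ∑ i, ‖K.starProjection (b i)‖ ^ 2 = Module.finrank 𝕜 K := by
  let v := stdOrthonormalBasis 𝕜 K
  calc ∑ i, ‖K.starProjection (b i)‖ ^ 2 = ∑ j, ∑ i, ‖⟪(v j : E), b i⟫_𝕜‖ ^ 2 := by
        simp only [norm_starProjection_sq_eq_sum v]
        exact Finset.sum_comm
    _ = ∑ j, ‖(v j : E)‖ ^ 2 := by simp only [b.sum_sq_norm_inner_left]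
    _ = Module.finrank 𝕜 K := by
        simp only [norm_coe, v.orthonormal.1, one_pow, Finset.sum_const, Finset.card_univ,
          Fintype.card_fin, nsmul_eq_mul, mul_one]

theorem Submodule.norm_starProjection_comp_sq_le [CompleteSpace E] [CompleteSpace F]
    {K : Submodule 𝕜 E} [K.HasOrthogonalProjection] (b : OrthonormalBasis ι 𝕜 K) (T : F →L[𝕜] E) :
    ‖K.starProjection ∘L T‖ ^ 2 ≤ ∑ i, ‖T.adjoint (b i)‖ ^ 2 := by
  have hC : 0 ≤ ∑ i, ‖T.adjoint (b i)‖ ^ 2 := by positivity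
  suffices ‖K.starProjection ∘L T‖ ≤ √(∑ i, ‖T.adjoint (b i)‖ ^ 2) by
    simpa [Real.sq_sqrt hC] using pow_le_pow_left₀ (norm_nonneg _) this 2
  refine ContinuousLinearMap.opNorm_le_bound _ (Real.sqrt_nonneg _) fun x ↦ ?_
  rw [← Real.sqrt_sq (norm_nonneg x), ← Real.sqrt_mul hC, ← Real.sqrt_sq (norm_nonneg (_ : E))]
  gcongr
  rw [ContinuousLinearMap.comp_apply, norm_starProjection_sq_eq_sum b, Finset.sum_mul]
  gcongr with i
  rw [← T.adjoint_inner_left, ← mul_pow]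
  exact pow_le_pow_left₀ (norm_nonneg _) (norm_inner_le_norm _ _) 2

end Projection

theorem stmt_9_general (N : ℕ) (ℋ : Type*) [NormedAddCommGroup ℋ] [InnerProductSpace ℂ ℋ]
    [FiniteDimensional ℂ ℋ]
    (w : OrthonormalBasis (Fin N) ℂ ℋ)
    (X : Submodule ℂ ℋ) (d : ℕ) (hd : d ≤ N) :
    ∃ D : Finset (Fin N), D.card = d ∧
      ‖((Submodule.span ℂ (w '' D)).subtypeL.comp
            (Submodule.orthogonalProjectionOnto (Submodule.span ℂ (w '' D)))).comp
          (X.subtypeL.comp (Submodule.orthogonalProjectionOnto X))‖ ^ 2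
        ≤ (d : ℝ) * (Module.finrank ℂ X) / N := by
  classical
  obtain ⟨D, hcard, hD⟩ := Finset.exists_card_eq_sum_le_mul_sum_div
    (fun i ↦ ‖X.starProjection (w i)‖ ^ 2) (hd.trans_eq (Fintype.card_fin N).symm)
  refine ⟨D, hcard, ?_⟩
  -- `OrthonormalBasis.span` is an orthonormal basis of `span (D.image w)`
  rw [← Finset.coe_image]
  have hHS := Submodule.norm_starProjection_comp_sq_le
    (OrthonormalBasis.span w.orthonormal D) X.starProjection
  rw [(isSelfAdjoint_starProjection X).adjoint_eq] at hHS
  simp only [OrthonormalBasis.span_apply,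
    Finset.sum_coe_sort D fun i ↦ ‖X.starProjection (w i)‖ ^ 2] at hHS
  rw [Submodule.sum_norm_starProjection_sq_eq_finrank w X, Fintype.card_fin] at hD
  exact hHS.trans hD

/-- for any orthonormal basis `{w_i}` of an `N`-dimensional complex Hilbert
space `ℋ` and any subspace `X`, for every `d ≤ N` there is a set `D` of `d` basis indices
such that `W = span{w_i : i ∈ D}` satisfies `‖Π_W Π_X‖² ≤ d · dim X / N`. -/
theorem stmt_9 (N : ℕ) (ℋ : Type*) [NormedAddCommGroup ℋ] [InnerProductSpace ℂ ℋ]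
    [FiniteDimensional ℂ ℋ] (hdim : Module.finrank ℂ ℋ = N)
    (w : OrthonormalBasis (Fin N) ℂ ℋ)
    (X : Submodule ℂ ℋ) (d : ℕ) (hd : d ≤ N) :
    ∃ D : Finset (Fin N), D.card = d ∧
      ‖((Submodule.span ℂ (w '' D)).subtypeL.comp
            (Submodule.orthogonalProjectionOnto (Submodule.span ℂ (w '' D)))).comp
          (X.subtypeL.comp (Submodule.orthogonalProjectionOnto X))‖ ^ 2
        ≤ (d : ℝ) * (Module.finrank ℂ X) / N :=
  stmt_9_general N ℋ w X d hd
end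

section
/- For n qubits and a natural number θ with 1 ≤ θ ≤ n/2, the variance of the θ-Hamiltonian H₁^θ in the uniform superposition state u = 2^{−n/2} Σ_{j=0}^{2^n−1} e_j satisfies ⟨u, (H₁^θ)² u⟩ − ⟨u, H₁^θ u⟩² ≤ 2 θ² e^{−(n/2 − θ)²/n}. -/
/-!
Put `g = min θ h`. Since `0 ≤ g ≤ θ`, `𝔼 g² - (𝔼 g)² ≤ θ 𝔼 g - (𝔼 g)² ≤ θ (θ - 𝔼 g)`, and
`θ - 𝔼 g ≤ θ · P(h ≤ θ)`. Under the uniform superposition `h` is binomially distributed with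
parameters `n` and `1/2`, so the Chernoff–Hoeffding bound gives
`P(h ≤ θ) ≤ exp (-2 (n/2 - θ)² / n)`.
-/

def hammingWeight (j : ℕ) : ℕ := (Nat.digits 2 j).sum

open Finset Real Matrix
open scoped BigOperators

lemma hammingWeight_two_mul (i : ℕ) : hammingWeight (2 * i) = hammingWeight i := by
  rcases Nat.eq_zero_or_pos i with rfl | hi
  · rfl
  · rw [hammingWeight, Nat.digits_def' one_lt_two (by omega)]
    simp [hammingWeight]

lemma hammingWeight_two_mul_add_one (i : ℕ) :
    hammingWeight (2 * i + 1) = hammingWeight i + 1 := by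
  rw [hammingWeight, Nat.digits_def' one_lt_two (by omega),
    show (2 * i + 1) % 2 = 1 by omega, show (2 * i + 1) / 2 = i by omega]
  simp [hammingWeight, add_comm]

lemma Finset.sum_range_two_mul {M : Type*} [AddCommMonoid M] (N : ℕ) (f : ℕ → M) :
    ∑ j ∈ range (2 * N), f j = ∑ i ∈ range N, (f (2 * i) + f (2 * i + 1)) := by
  induction N with
  | zero => simp
  | succ N ih =>
    rw [Nat.mul_succ, sum_range_succ, sum_range_succ, ih, sum_range_succ, add_assoc]

lemma sum_range_two_pow_pow_hammingWeight {R : Type*} [CommSemiring R] (n : ℕ) (x : R) :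
    ∑ j ∈ range (2 ^ n), x ^ hammingWeight j = (1 + x) ^ n := by
  induction n with
  | zero => simp [hammingWeight]
  | succ n ih =>
    rw [pow_succ', sum_range_two_mul, pow_succ, ← ih, sum_mul]
    simp only [hammingWeight_two_mul, hammingWeight_two_mul_add_one, pow_succ, mul_one_add]

lemma one_add_exp_neg_le (t : ℝ) : 1 + exp (-t) ≤ 2 * exp (-(t / 2) + t ^ 2 / 8) := by
  have hcosh : 1 + exp (-t) = 2 * exp (-(t / 2)) * cosh (t / 2) := by
    have e1 : exp (-(t / 2)) * exp (t / 2) = 1 := by rw [← exp_add]; simp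
    have e2 : exp (-(t / 2)) * exp (-(t / 2)) = exp (-t) := by rw [← exp_add]; ring_nf
    rw [cosh_eq]
    linear_combination -e1 - e2
  calc 1 + exp (-t) = 2 * exp (-(t / 2)) * cosh (t / 2) := hcosh
    _ ≤ 2 * exp (-(t / 2)) * exp ((t / 2) ^ 2 / 2) := by gcongr; exact cosh_le_exp_half_sq _
    _ = 2 * exp (-(t / 2) + t ^ 2 / 8) := by rw [mul_assoc, ← exp_add]; ring_nf

/-- Chernoff bound for the binomial distribution `hammingWeight j`, `j < 2 ^ n`, with the optimal
exponential parameter `t = 4 (n / 2 - m) / n`. -/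
lemma card_filter_hammingWeight_le_le (n : ℕ) {m : ℝ} (hm : m ≤ n / 2) :
    (#{j ∈ range (2 ^ n) | (hammingWeight j : ℝ) ≤ m} : ℝ)
      ≤ 2 ^ n * exp (-2 * (n / 2 - m) ^ 2 / n) := by
  set t : ℝ := 4 * (n / 2 - m) / n
  have ht : 0 ≤ t := div_nonneg (by linarith) n.cast_nonneg
  have hindicator : ∀ k : ℕ,
      (if (k : ℝ) ≤ m then (1 : ℝ) else 0) ≤ exp (t * m) * exp (-t) ^ k := by
    intro k
    rw [← exp_nat_mul, ← exp_add]
    split_ifs with hk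
    · exact one_le_exp (by nlinarith)
    · exact (exp_pos _).le
  have hexponent : t * m + n * (-(t / 2) + t ^ 2 / 8) = -2 * (n / 2 - m) ^ 2 / n := by
    rcases eq_or_ne (n : ℝ) 0 with hn | hn
    · simp [t, hn]
    · simp only [t]; field_simp; ring
  calc (#{j ∈ range (2 ^ n) | (hammingWeight j : ℝ) ≤ m} : ℝ)
      = ∑ j ∈ range (2 ^ n), if (hammingWeight j : ℝ) ≤ m then (1 : ℝ) else 0 :=
        natCast_card_filter _ _
    _ ≤ ∑ j ∈ range (2 ^ n), exp (t * m) * exp (-t) ^ hammingWeight j :=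
        sum_le_sum fun j _ => hindicator _
    _ = exp (t * m) * (1 + exp (-t)) ^ n := by
        rw [← mul_sum, sum_range_two_pow_pow_hammingWeight]
    _ ≤ exp (t * m) * (2 * exp (-(t / 2) + t ^ 2 / 8)) ^ n := by
        gcongr; exact one_add_exp_neg_le t
    _ = 2 ^ n * exp (t * m + n * (-(t / 2) + t ^ 2 / 8)) := by
        rw [mul_pow, ← exp_nat_mul, exp_add]; ring
    _ = 2 ^ n * exp (-2 * (n / 2 - m) ^ 2 / n) := by rw [hexponent]

lemma expect_sq_sub_sq_expect_le {ι : Type*} (s : Finset ι) (f : ι → ℝ) {c : ℝ}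
    (hf₀ : ∀ i ∈ s, 0 ≤ f i) (hfc : ∀ i ∈ s, f i ≤ c) :
    𝔼 i ∈ s, f i ^ 2 - (𝔼 i ∈ s, f i) ^ 2 ≤ c * (c - 𝔼 i ∈ s, f i) := by
  have hsq : 𝔼 i ∈ s, f i ^ 2 ≤ c * 𝔼 i ∈ s, f i := by
    rw [mul_expect]
    exact expect_le_expect fun i hi => by
      rw [sq]; exact mul_le_mul_of_nonneg_right (hfc i hi) (hf₀ i hi)
  nlinarith [sq_nonneg (c - 𝔼 i ∈ s, f i)]

lemma re_star_dotProduct_diagonal_mulVec_uniform {ι : Type*} [Fintype ι] [DecidableEq ι]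
    (d : ι → ℝ) :
    (star (fun _ : ι => ((√(Fintype.card ι : ℝ))⁻¹ : ℂ)) ⬝ᵥ
      (diagonal fun i => (d i : ℂ)) *ᵥ fun _ => ((√(Fintype.card ι : ℝ))⁻¹ : ℂ)).re
      = 𝔼 i, d i := by
  have hN : (0 : ℝ) ≤ Fintype.card ι := Nat.cast_nonneg _
  simp only [dotProduct, mulVec_diagonal, Pi.star_apply, ← Complex.ofReal_inv, Complex.star_def,
    Complex.conj_ofReal, ← Complex.ofReal_mul, ← Complex.ofReal_sum, Complex.ofReal_re]
  rw [← mul_sum, ← sum_mul, Fintype.expect_eq_sum_div_card, mul_comm, mul_assoc, ← mul_inv,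
    mul_self_sqrt hN, div_eq_mul_inv]

lemma sub_expect_min_hammingWeight_le (n θ : ℕ) (hθ : (θ : ℝ) ≤ n / 2) :
    θ - 𝔼 j : Fin (2 ^ n), ((min θ (hammingWeight j) : ℕ) : ℝ)
      ≤ θ * exp (-2 * (n / 2 - θ) ^ 2 / n) := by
  have hdefect : ∀ k : ℕ,
      (θ : ℝ) - (min θ k : ℕ) ≤ θ * if (k : ℝ) ≤ θ then 1 else 0 := by
    intro k
    split_ifs with hk
    · simp
    · rw [min_eq_left (by exact_mod_cast (not_le.mp hk).le)]; simp
  have hsum : ∑ j : Fin (2 ^ n), ((θ : ℝ) - (min θ (hammingWeight j) : ℕ))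
      ≤ θ * #{j ∈ range (2 ^ n) | (hammingWeight j : ℝ) ≤ θ} := by
    rw [natCast_card_filter, mul_sum,
      ← Fin.sum_univ_eq_sum_range (fun j => θ * if (hammingWeight j : ℝ) ≤ θ then (1 : ℝ) else 0)]
    exact sum_le_sum fun j _ => hdefect _
  have hpos : (0 : ℝ) < 2 ^ n := by positivity
  have hmean : θ - 𝔼 j : Fin (2 ^ n), ((min θ (hammingWeight j) : ℕ) : ℝ)
      = 𝔼 j : Fin (2 ^ n), ((θ : ℝ) - (min θ (hammingWeight j) : ℕ)) := by
    rw [expect_sub_distrib, Fintype.expect_const]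
  rw [hmean, Fintype.expect_eq_sum_div_card,
    Fintype.card_fin, Nat.cast_pow, Nat.cast_ofNat, div_le_iff₀ hpos]
  calc _ ≤ _ := hsum
    _ ≤ θ * (2 ^ n * exp (-2 * (n / 2 - θ) ^ 2 / n)) := by
        gcongr; exact card_filter_hammingWeight_le_le n hθ
    _ = _ := by ring

theorem stmt_13_general (n θ : ℕ) (hθ2 : (θ : ℝ) ≤ n / 2)
    (Hθ : Matrix (Fin (2 ^ n)) (Fin (2 ^ n)) ℂ)
    (hHθ : Hθ = Matrix.diagonal (fun j : Fin (2 ^ n) =>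
      ((min θ (hammingWeight (j : ℕ)) : ℕ) : ℂ)))
    (u : Fin (2 ^ n) → ℂ)
    (hu : u = fun _ => ((Real.sqrt (2 ^ n))⁻¹ : ℂ)) :
    (dotProduct (star u) ((Hθ * Hθ).mulVec u)).re
        - ((dotProduct (star u) (Hθ.mulVec u)).re) ^ 2
      ≤ 2 * (θ : ℝ) ^ 2 * Real.exp (-((n : ℝ) / 2 - θ) ^ 2 / n) := by
  set g : Fin (2 ^ n) → ℝ := fun j => ((min θ (hammingWeight j) : ℕ) : ℝ)
  have hH : Hθ = diagonal fun j => (g j : ℂ) := by simp only [hHθ, g, Complex.ofReal_natCast]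
  have hH2 : Hθ * Hθ = diagonal fun j => ((g j ^ 2 : ℝ) : ℂ) := by simp [hH, sq]
  have hcard : (2 : ℝ) ^ n = Fintype.card (Fin (2 ^ n)) := by simp
  rw [hH2, hH, hu, hcard, re_star_dotProduct_diagonal_mulVec_uniform,
    re_star_dotProduct_diagonal_mulVec_uniform]
  have hexp : exp (-2 * (n / 2 - θ) ^ 2 / n) ≤ exp (-((n : ℝ) / 2 - θ) ^ 2 / n) :=
    exp_le_exp.mpr (div_le_div_of_nonneg_right (by nlinarith) n.cast_nonneg)
  calc _ ≤ θ * (θ - 𝔼 j, g j) :=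
        expect_sq_sub_sq_expect_le _ _ (fun _ _ => by positivity) (fun _ _ => by simp [g])
    _ ≤ θ * (θ * exp (-2 * (n / 2 - θ) ^ 2 / n)) := by
        gcongr; exact sub_expect_min_hammingWeight_le n θ hθ2
    _ ≤ 2 * θ ^ 2 * exp (-((n : ℝ) / 2 - θ) ^ 2 / n) := by
        nlinarith [mul_le_mul_of_nonneg_left hexp (sq_nonneg (θ : ℝ)),
          exp_pos (-((n : ℝ) / 2 - θ) ^ 2 / n)]

/-- for `1 ≤ θ ≤ n/2`, the variance of the θ-Hamiltonian
`H₁^θ = diag(min(θ, h(j)))` in the uniform superposition `u` satisfies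
`⟨u, (H₁^θ)² u⟩ − ⟨u, H₁^θ u⟩² ≤ 2 θ² e^{−(n/2 − θ)²/n}`. -/
theorem stmt_13 (n θ : ℕ) (hθ1 : 1 ≤ θ) (hθ2 : (θ : ℝ) ≤ n / 2)
    (Hθ : Matrix (Fin (2 ^ n)) (Fin (2 ^ n)) ℂ)
    (hHθ : Hθ = Matrix.diagonal (fun j : Fin (2 ^ n) =>
      ((min θ (hammingWeight (j : ℕ)) : ℕ) : ℂ)))
    (u : Fin (2 ^ n) → ℂ)
    (hu : u = fun _ => ((Real.sqrt (2 ^ n))⁻¹ : ℂ)) :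
    (dotProduct (star u) ((Hθ * Hθ).mulVec u)).re
        - ((dotProduct (star u) (Hθ.mulVec u)).re) ^ 2
      ≤ 2 * (θ : ℝ) ^ 2 * Real.exp (-((n : ℝ) / 2 - θ) ^ 2 / n) :=
  stmt_13_general n θ hθ2 Hθ hHθ u hu
end
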